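/- arXiv:1506.00062 — 7 statements merged into one kernel-verified Lean document; each statement's English description precedes it below -/
import Mathlib

section
/- Let 𝒱 be a finite-dimensional real inner product space, A : 𝒱 → 𝒱 self-adjoint positive definite, b ∈ 𝒱 nonzero, and f(v) := (1/‖b‖²)·(½⟨Av, v⟩ − ⟨b, v⟩). Let V : ℝ^m → 𝒱 be an injective linear map, v ∈ 𝒱, r := b − A v, and v' := v + V (V† A V)⁻¹ V† r. Then f(v') − f(v) = −(1/(2‖b‖²)) · ⟨V (V† A V)⁻¹ V† r, r⟩, and in particular f(v') ≤ f(v). -/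
open scoped RealInnerProductSpace

/-- Lemma 4.8: a Galerkin (ALS) micro-step `v' = v + V (V† A V)⁻¹ V† r` with `r = b − A v`
decreases the normalised quadratic objective `f v = (1/‖b‖²)(½⟨Av, v⟩ − ⟨b, v⟩)` by exactly
`(1/(2‖b‖²)) ⟨V (V† A V)⁻¹ V† r, r⟩`.  The element `(V† A V)⁻¹ V† r` is encoded as the
solution `g` of the normal equation `V† A V g = V† r`. -/
theorem stmt_4 {𝒱 : Type*} [NormedAddCommGroup 𝒱] [InnerProductSpace ℝ 𝒱]
    [FiniteDimensional ℝ 𝒱]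
    (A : 𝒱 →ₗ[ℝ] 𝒱) (hA_sym : ∀ v w, ⟪A v, w⟫ = ⟪v, A w⟫)
    (hA_pos : ∀ v, v ≠ 0 → 0 < ⟪A v, v⟫)
    (b : 𝒱) (hb : b ≠ 0) (m : ℕ)
    (V : EuclideanSpace ℝ (Fin m) →ₗ[ℝ] 𝒱) (hV : Function.Injective V)
    (v : 𝒱) (g : EuclideanSpace ℝ (Fin m))
    (hg : (LinearMap.adjoint V) (A (V g)) = (LinearMap.adjoint V) (b - A v)) :
    (1 / ‖b‖ ^ 2) * ((1 / 2) * ⟪A (v + V g), v + V g⟫ - ⟪b, v + V g⟫) -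
        (1 / ‖b‖ ^ 2) * ((1 / 2) * ⟪A v, v⟫ - ⟪b, v⟫) =
      -(1 / (2 * ‖b‖ ^ 2)) * ⟪V g, b - A v⟫ ∧
    (1 / ‖b‖ ^ 2) * ((1 / 2) * ⟪A (v + V g), v + V g⟫ - ⟪b, v + V g⟫) ≤
      (1 / ‖b‖ ^ 2) * ((1 / 2) * ⟪A v, v⟫ - ⟪b, v⟫) := by
  set w := V g with hw
  have key : ⟪w, A w⟫ = ⟪w, b - A v⟫ := by
    have h1 : ⟪g, (LinearMap.adjoint V) (A (V g))⟫ = ⟪V g, A (V g)⟫ :=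
      LinearMap.adjoint_inner_right V _ _
    have h2 : ⟪g, (LinearMap.adjoint V) (b - A v)⟫ = ⟪V g, b - A v⟫ :=
      LinearMap.adjoint_inner_right V _ _
    rw [← h1, ← h2, hg]
  have hwr : ⟪w, b - A v⟫ = ⟪b, w⟫ - ⟪A v, w⟫ := by
    rw [inner_sub_right, real_inner_comm w b, real_inner_comm w (A v)]
  have e1 : ⟪A (v + w), v + w⟫ = ⟪A v, v⟫ + 2 * ⟪A v, w⟫ + ⟪w, A w⟫ := by
    rw [map_add, inner_add_left, inner_add_right, inner_add_right]
    have : ⟪A w, v⟫ = ⟪A v, w⟫ := by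
      rw [hA_sym, real_inner_comm]
    rw [this, ← hA_sym]
    ring
  have e2 : ⟪b, v + w⟫ = ⟪b, v⟫ + ⟪b, w⟫ := inner_add_right b v w
  have hnn : 0 ≤ ⟪w, A w⟫ := by
    rcases eq_or_ne w 0 with h | h
    · simp [h]
    · exact le_of_lt (by rw [← hA_sym]; exact hA_pos w h)
  have hbn : (0:ℝ) < ‖b‖ := norm_pos_iff.mpr hb
  have hb2 : (0:ℝ) < ‖b‖ ^ 2 := by positivity
  have heq : (1 / ‖b‖ ^ 2) * ((1 / 2) * ⟪A (v + w), v + w⟫ - ⟪b, v + w⟫) -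
        (1 / ‖b‖ ^ 2) * ((1 / 2) * ⟪A v, v⟫ - ⟪b, v⟫) =
      -(1 / (2 * ‖b‖ ^ 2)) * ⟪w, b - A v⟫ := by
    rw [e1, e2, key, hwr]
    field_simp
    ring
  refine ⟨heq, ?_⟩
  have : -(1 / (2 * ‖b‖ ^ 2)) * ⟪w, b - A v⟫ ≤ 0 := by
    rw [← key]
    have : 0 < 1 / (2 * ‖b‖ ^ 2) := by positivity
    nlinarith
  linarith [heq, this]
end

section
/- Let 𝒱 be a finite-dimensional real inner product space, A : 𝒱 → 𝒱 self-adjoint positive definite, b ∈ 𝒱 nonzero, and f(v) := (1/‖b‖²)·(½⟨Av, v⟩ − ⟨b, v⟩). Let K and K' be linear subspaces of 𝒱, let v be the minimiser of f over K and v' the minimiser of f over K', and suppose v ∈ K'. Then (a) f(v') ≤ f(v), (b) ⟨A v', v'⟩ ≥ ⟨A v, v⟩, and (c) ⟨v', b⟩ ≥ ⟨v, b⟩. -/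
open scoped RealInnerProductSpace

lemma key_stmt6 {𝒱 : Type*} [NormedAddCommGroup 𝒱] [InnerProductSpace ℝ 𝒱]
    (A : 𝒱 →ₗ[ℝ] 𝒱)
    (hA_pos : ∀ v, v ≠ 0 → 0 < ⟪A v, v⟫)
    (b : 𝒱) (hb : b ≠ 0)
    (K : Submodule ℝ 𝒱) (v : 𝒱) (hvK : v ∈ K)
    (hvmin : ∀ w ∈ K,
      (1 / ‖b‖ ^ 2) * ((1 / 2) * ⟪A v, v⟫ - ⟪b, v⟫) ≤
        (1 / ‖b‖ ^ 2) * ((1 / 2) * ⟪A w, w⟫ - ⟪b, w⟫)) :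
    ⟪A v, v⟫ = ⟪b, v⟫ := by
  by_cases hv : v = 0
  · simp [hv]
  set α := ⟪A v, v⟫ with hα
  set β := ⟪b, v⟫ with hβ
  have hαpos : 0 < α := hA_pos v hv
  have hbn : ‖b‖ ≠ 0 := norm_ne_zero_iff.mpr hb
  have hnb : (0:ℝ) < 1 / ‖b‖ ^ 2 := by positivity
  have key : ∀ s : ℝ, (1/2) * α - β ≤ (1/2) * (s^2 * α) - s * β := by
    intro s
    have hs : (s • v) ∈ K := K.smul_mem s hvK
    have := hvmin (s • v) hs
    have h2 : (1/2) * α - β ≤ (1/2) * ⟪A (s • v), s • v⟫ - ⟪b, s • v⟫ :=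
      le_of_mul_le_mul_left this hnb
    have e1 : ⟪A (s • v), s • v⟫ = s^2 * α := by
      simp [map_smul, real_inner_smul_left, real_inner_smul_right, hα]; ring
    have e2 : ⟪b, s • v⟫ = s * β := by simp [real_inner_smul_right, hβ]
    rw [e1, e2] at h2; exact h2
  have h := key (β / α)
  have h3 : (α - β)^2 ≤ 0 := by
    have hne : α ≠ 0 := ne_of_gt hαpos
    have h2 := mul_le_mul_of_nonneg_left h hαpos.le
    have e : α * ((1/2) * ((β/α)^2 * α) - (β/α) * β) = -(β^2)/2 := by
      field_simp; ring
    rw [e] at h2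
    nlinarith
  nlinarith [sq_nonneg (α - β)]


/-- Corollary 4.11: let `v` be the minimiser of the normalised quadratic objective
`f v = (1/‖b‖²)(½⟨Av, v⟩ − ⟨b, v⟩)` over a subspace `K` and `v'` the minimiser over a
subspace `K'`, and suppose `v ∈ K'`.  Then (a) `f v' ≤ f v`, (b) `⟨A v', v'⟩ ≥ ⟨A v, v⟩`,
and (c) `⟨v', b⟩ ≥ ⟨v, b⟩`. -/
theorem stmt_6 {𝒱 : Type*} [NormedAddCommGroup 𝒱] [InnerProductSpace ℝ 𝒱]
    [FiniteDimensional ℝ 𝒱]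
    (A : 𝒱 →ₗ[ℝ] 𝒱) (hA_sym : ∀ v w, ⟪A v, w⟫ = ⟪v, A w⟫)
    (hA_pos : ∀ v, v ≠ 0 → 0 < ⟪A v, v⟫)
    (b : 𝒱) (hb : b ≠ 0)
    (K K' : Submodule ℝ 𝒱) (v v' : 𝒱)
    (hvK : v ∈ K)
    (hvmin : ∀ w ∈ K,
      (1 / ‖b‖ ^ 2) * ((1 / 2) * ⟪A v, v⟫ - ⟪b, v⟫) ≤
        (1 / ‖b‖ ^ 2) * ((1 / 2) * ⟪A w, w⟫ - ⟪b, w⟫))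
    (hv'K' : v' ∈ K')
    (hv'min : ∀ w ∈ K',
      (1 / ‖b‖ ^ 2) * ((1 / 2) * ⟪A v', v'⟫ - ⟪b, v'⟫) ≤
        (1 / ‖b‖ ^ 2) * ((1 / 2) * ⟪A w, w⟫ - ⟪b, w⟫))
    (hvK' : v ∈ K') :
    (1 / ‖b‖ ^ 2) * ((1 / 2) * ⟪A v', v'⟫ - ⟪b, v'⟫) ≤
        (1 / ‖b‖ ^ 2) * ((1 / 2) * ⟪A v, v⟫ - ⟪b, v⟫) ∧
      ⟪A v, v⟫ ≤ ⟪A v', v'⟫ ∧ ⟪v, b⟫ ≤ ⟪v', b⟫ := by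
  have ha := hv'min v hvK'
  have h1 : ⟪A v, v⟫ = ⟪b, v⟫ := key_stmt6 A hA_pos b hb K v hvK hvmin
  have h2 : ⟪A v', v'⟫ = ⟪b, v'⟫ := key_stmt6 A hA_pos b hb K' v' hv'K' hv'min
  have hbn : ‖b‖ ≠ 0 := norm_ne_zero_iff.mpr hb
  have hnb : (0:ℝ) < 1 / ‖b‖ ^ 2 := by positivity
  have hβ : ⟪b, v⟫ ≤ ⟪b, v'⟫ := by
    have := le_of_mul_le_mul_left ha hnb
    nlinarith
  refine ⟨ha, by nlinarith, by
    simpa [real_inner_comm] using hβ⟩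
end

section
/- Let 𝒱 and P be finite-dimensional real inner product spaces, A : 𝒱 → 𝒱 self-adjoint positive definite, b ∈ 𝒱 nonzero, and f(v) := (1/‖b‖²)·(½⟨Av, v⟩ − ⟨b, v⟩). Let W : P → 𝒱 be an injective linear map, p ∈ P arbitrary, and p⁺ the minimiser of q ↦ f(W q) over P. Then f(W p) − f(W p⁺) ≥ ‖W†(A W p − b)‖² / (2 ‖b‖² · λ_max(A) · λ_max(W† W)), where λ_max denotes the largest eigenvalue of a self-adjoint positive (semi)definite endomorphism. -/
open scoped RealInnerProductSpace

/-- The core descent estimate of Lemma 4.12: for an injective linear map `W`, any `p`, and the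
minimiser `p⁺` of `q ↦ f (W q)`, one has
`f (W p) − f (W p⁺) ≥ ‖W†(A W p − b)‖² / (2‖b‖² λ_max(A) λ_max(W† W))`.
The largest eigenvalues are encoded through arbitrary spectral upper bounds `λA`, `λW`
(for the least such bounds these are exactly `λ_max(A)` and `λ_max(W† W)`). -/
theorem stmt_8 {𝒱 P : Type*} [NormedAddCommGroup 𝒱] [InnerProductSpace ℝ 𝒱]
    [FiniteDimensional ℝ 𝒱] [NormedAddCommGroup P] [InnerProductSpace ℝ P]
    [FiniteDimensional ℝ P]
    (A : 𝒱 →ₗ[ℝ] 𝒱) (hA_sym : ∀ v w, ⟪A v, w⟫ = ⟪v, A w⟫)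
    (hA_pos : ∀ v, v ≠ 0 → 0 < ⟪A v, v⟫)
    (b : 𝒱) (hb : b ≠ 0)
    (W : P →ₗ[ℝ] 𝒱) (hW : Function.Injective W)
    (p pplus : P)
    (hmin : ∀ q : P,
      (1 / ‖b‖ ^ 2) * ((1 / 2) * ⟪A (W pplus), W pplus⟫ - ⟪b, W pplus⟫) ≤
        (1 / ‖b‖ ^ 2) * ((1 / 2) * ⟪A (W q), W q⟫ - ⟪b, W q⟫))
    (lA lW : ℝ)
    (hlA : ∀ v : 𝒱, ⟪A v, v⟫ ≤ lA * ‖v‖ ^ 2)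
    (hlW : ∀ q : P, ⟪(LinearMap.adjoint W) (W q), q⟫ ≤ lW * ‖q‖ ^ 2) :
    ‖(LinearMap.adjoint W) (A (W p) - b)‖ ^ 2 / (2 * ‖b‖ ^ 2 * lA * lW) ≤
      (1 / ‖b‖ ^ 2) * ((1 / 2) * ⟪A (W p), W p⟫ - ⟪b, W p⟫) -
        (1 / ‖b‖ ^ 2) * ((1 / 2) * ⟪A (W pplus), W pplus⟫ - ⟪b, W pplus⟫) := by
  set g : P := (LinearMap.adjoint W) (A (W p) - b) with hgdef
  by_cases hg0 : g = 0
  · rw [hg0]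
    simp only [norm_zero]
    rw [zero_pow (by norm_num), zero_div]
    linarith [hmin p]
  · have hB : (0:ℝ) < ‖b‖ ^ 2 := by have := norm_pos_iff.mpr hb; positivity
    have hWg : W g ≠ 0 := fun h => hg0 (hW (h.trans (map_zero W).symm))
    have hWgsq : ⟪(LinearMap.adjoint W) (W g), g⟫ = ‖W g‖ ^ 2 := by
      rw [LinearMap.adjoint_inner_left, real_inner_self_eq_norm_sq]
    have hNg : (0:ℝ) < ‖g‖ ^ 2 := by have := norm_pos_iff.mpr hg0; positivity
    have hNWg : (0:ℝ) < ‖W g‖ ^ 2 := by have := norm_pos_iff.mpr hWg; positivity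
    have hlWpos : 0 < lW := by nlinarith [hlW g]
    have hlApos : 0 < lA := by nlinarith [hlA (W g), hA_pos (W g) hWg]
    have hcross : ⟪A (W p), W g⟫ - ⟪b, W g⟫ = ‖g‖ ^ 2 := by
      have : ⟪g, g⟫ = ⟪A (W p) - b, W g⟫ := by
        rw [hgdef, LinearMap.adjoint_inner_left]
      rw [inner_sub_left] at this
      rw [← this, real_inner_self_eq_norm_sq]
    set t : ℝ := 1 / (lA * lW) with htdef
    have ht : 0 < t := by positivity
    have key := hmin (p - t • g)
    have hexp1 : ⟪A (W (p - t • g)), W (p - t • g)⟫ =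
        ⟪A (W p), W p⟫ - 2 * t * ⟪A (W p), W g⟫ + t ^ 2 * ⟪A (W g), W g⟫ := by
      have hsym : ⟪A (W g), W p⟫ = ⟪A (W p), W g⟫ := by
        rw [hA_sym, real_inner_comm]
      simp only [map_sub, map_smul, inner_sub_left, inner_sub_right,
        inner_smul_left, inner_smul_right, RCLike.ofReal_real_eq_id, id_eq, hsym, starRingEnd_apply, star_trivial]
      ring
    have hexp2 : ⟪b, W (p - t • g)⟫ = ⟪b, W p⟫ - t * ⟪b, W g⟫ := by
      simp only [map_sub, map_smul, inner_sub_right, inner_smul_right,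
        RCLike.ofReal_real_eq_id, id_eq]
    rw [hexp1, hexp2] at key
    have hγ : ⟪A (W g), W g⟫ ≤ lA * lW * ‖g‖ ^ 2 := by
      have h1 := hlA (W g)
      have h2 := hlW g
      rw [hWgsq] at h2
      nlinarith
    have hstep : ‖g‖ ^ 2 / (2 * ‖b‖ ^ 2 * lA * lW) ≤
        (1 / ‖b‖ ^ 2) * ((1 / 2) * ⟪A (W p), W p⟫ - ⟪b, W p⟫) -
          (1 / ‖b‖ ^ 2) * ((1 / 2) * (⟪A (W p), W p⟫ - 2 * t * ⟪A (W p), W g⟫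
            + t ^ 2 * ⟪A (W g), W g⟫) - (⟪b, W p⟫ - t * ⟪b, W g⟫)) := by
      have hsimp : (1 / ‖b‖ ^ 2) * ((1 / 2) * ⟪A (W p), W p⟫ - ⟪b, W p⟫) -
          (1 / ‖b‖ ^ 2) * ((1 / 2) * (⟪A (W p), W p⟫ - 2 * t * ⟪A (W p), W g⟫
            + t ^ 2 * ⟪A (W g), W g⟫) - (⟪b, W p⟫ - t * ⟪b, W g⟫)) =
          (1 / ‖b‖ ^ 2) * (t * ‖g‖ ^ 2 - t ^ 2 / 2 * ⟪A (W g), W g⟫) := by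
        rw [← hcross]; ring
      rw [hsimp]
      have hbound : ‖g‖ ^ 2 / (2 * lA * lW) ≤ t * ‖g‖ ^ 2 - t ^ 2 / 2 * ⟪A (W g), W g⟫ := by
        have ht2 : t = 1 / (lA * lW) := htdef
        have h := mul_le_mul_of_nonneg_left hγ (by positivity : (0:ℝ) ≤ t ^ 2 / 2)
        have : t ^ 2 / 2 * (lA * lW * ‖g‖ ^ 2) = ‖g‖ ^ 2 / (2 * lA * lW) := by
          rw [ht2]; field_simp
        rw [this] at h
        have htN : t * ‖g‖ ^ 2 = ‖g‖ ^ 2 / (lA * lW) := by rw [ht2]; ring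
        rw [htN]
        have : ‖g‖ ^ 2 / (lA * lW) - ‖g‖ ^ 2 / (2 * lA * lW) = ‖g‖ ^ 2 / (2 * lA * lW) := by
          field_simp; ring
        linarith
      have h2 := mul_le_mul_of_nonneg_left hbound (by positivity : (0:ℝ) ≤ 1 / ‖b‖ ^ 2)
      have heq : (1 / ‖b‖ ^ 2) * (‖g‖ ^ 2 / (2 * lA * lW)) =
          ‖g‖ ^ 2 / (2 * ‖b‖ ^ 2 * lA * lW) := by
        rw [one_div_mul_eq_div, div_div]
        ring_nf
      rw [heq] at h2
      linarith
    linarith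
end

section
/- Let 𝒱 be a finite-dimensional real inner product space, A : 𝒱 → 𝒱 self-adjoint positive definite, b ∈ 𝒱 nonzero, and f(v) := (1/‖b‖²)·(½⟨Av, v⟩ − ⟨b, v⟩). Let L ∈ ℕ and let v_0, v_1, …, v_L be a chain in 𝒱 in which each v_{μ+1} is obtained from v_μ by a Galerkin micro-step, i.e. v_{μ+1} = v_μ + V_μ (V_μ† A V_μ)⁻¹ V_μ† (b − A v_μ) for some injective linear map V_μ : ℝ^{m_μ} → 𝒱. Then ⟨A (v_L − v_0), v_L − v_0⟩ ≤ 2 L ‖b‖² · (f(v_0) − f(v_L)). -/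
/-!
With `energy u = ⟪A u, u⟫ - 2⟪b, u⟫ = 2‖b‖² f u`, a Galerkin step `w = V g` satisfies
`⟪A w, w⟫ = ⟪b - A u, w⟫` (test the normal equation against `g`), so it lowers the energy by
exactly `‖w‖_A²`. Telescoping, `energy (v 0) - energy (v L) = ∑ ‖d μ‖_A²` for the steps `d μ`,
while `v L - v 0 = ∑ d μ` and `‖∑_{μ < L} d μ‖_A² ≤ L ∑ ‖d μ‖_A²` because
`2⟪A x, y⟫ ≤ ‖x‖_A² + ‖y‖_A²`.
-/

open scoped RealInnerProductSpace
open Finset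

section

variable {E : Type*} [NormedAddCommGroup E] [InnerProductSpace ℝ E]

namespace LinearMap.IsPositive

variable {A : E →ₗ[ℝ] E}

theorem two_mul_inner_le (hA : A.IsPositive) (x y : E) :
    2 * ⟪A x, y⟫ ≤ ⟪A x, x⟫ + ⟪A y, y⟫ := by
  have hyx : ⟪A y, x⟫ = ⟪A x, y⟫ := by rw [hA.isSymmetric, real_inner_comm]
  have := hA.inner_nonneg_left (x - y)
  simp only [map_sub, inner_sub_left, inner_sub_right, hyx] at this
  linarith

theorem inner_sum_le_card_mul_sum (hA : A.IsPositive) {ι : Type*} (s : Finset ι) (x : ι → E) :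
    ⟪A (∑ i ∈ s, x i), ∑ i ∈ s, x i⟫ ≤ #s * ∑ i ∈ s, ⟪A (x i), x i⟫ := by
  have h : 2 * ⟪A (∑ i ∈ s, x i), ∑ i ∈ s, x i⟫ ≤
      ∑ i ∈ s, ∑ j ∈ s, (⟪A (x i), x i⟫ + ⟪A (x j), x j⟫) := by
    rw [map_sum, sum_inner, mul_sum]
    gcongr with i
    rw [inner_sum, mul_sum]
    gcongr with j
    exact hA.two_mul_inner_le _ _
  simp only [sum_add_distrib, sum_const, nsmul_eq_mul, ← mul_sum] at h
  linarith

end LinearMap.IsPositive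

theorem inner_eq_inner_of_adjoint_eq {F : Type*} [NormedAddCommGroup F] [InnerProductSpace ℝ F]
    [FiniteDimensional ℝ E] [FiniteDimensional ℝ F] {V : F →ₗ[ℝ] E} {x y : E}
    (h : V.adjoint x = V.adjoint y) (g : F) : ⟪x, V g⟫ = ⟪y, V g⟫ := by
  rw [← LinearMap.adjoint_inner_left, h, LinearMap.adjoint_inner_left]

/-- `energy A b = 2 ‖b‖² f` for the normalised objective `f`. -/
def energy (A : E →ₗ[ℝ] E) (b u : E) : ℝ := ⟪A u, u⟫ - 2 * ⟪b, u⟫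

theorem energy_add_of_inner_eq {A : E →ₗ[ℝ] E} (hA : A.IsSymmetric) {b u w : E}
    (hw : ⟪A w, w⟫ = ⟪b - A u, w⟫) : energy A b (u + w) = energy A b u - ⟪A w, w⟫ := by
  have huw : ⟪A w, u⟫ = ⟪A u, w⟫ := by rw [hA, real_inner_comm]
  rw [inner_sub_left] at hw
  simp only [energy, map_add, inner_add_left, inner_add_right, huw]
  linarith

theorem energy_galerkin_step {F : Type*} [NormedAddCommGroup F] [InnerProductSpace ℝ F]
    [FiniteDimensional ℝ E] [FiniteDimensional ℝ F] {A : E →ₗ[ℝ] E} (hA : A.IsSymmetric)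
    {V : F →ₗ[ℝ] E} {b u : E} {g : F} (hg : V.adjoint (A (V g)) = V.adjoint (b - A u)) :
    energy A b (u + V g) = energy A b u - ⟪A (V g), V g⟫ :=
  energy_add_of_inner_eq hA (inner_eq_inner_of_adjoint_eq hg g)

end

/-- Key estimate in the proof of Lemma 4.14: if `v 0, v 1, …, v L` is a chain in which each
`v (μ+1)` arises from `v μ` by a Galerkin micro-step
`v (μ+1) = v μ + V (V† A V)⁻¹ V† (b − A (v μ))` (the element `(V† A V)⁻¹ V† (b − A (v μ))`
being encoded as the solution `g` of the corresponding normal equation), then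
`‖v L − v 0‖_A² ≤ 2 L ‖b‖² (f (v 0) − f (v L))` for the normalised quadratic objective
`f v = (1/‖b‖²)(½⟨Av, v⟩ − ⟨b, v⟩)`. -/
theorem stmt_9 {𝒱 : Type*} [NormedAddCommGroup 𝒱] [InnerProductSpace ℝ 𝒱]
    [FiniteDimensional ℝ 𝒱]
    (A : 𝒱 →ₗ[ℝ] 𝒱) (hA_sym : ∀ v w, ⟪A v, w⟫ = ⟪v, A w⟫)
    (hA_pos : ∀ v, v ≠ 0 → 0 < ⟪A v, v⟫)
    (b : 𝒱) (hb : b ≠ 0)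
    (L : ℕ) (v : ℕ → 𝒱)
    (hchain : ∀ μ < L, ∃ (m : ℕ) (V : EuclideanSpace ℝ (Fin m) →ₗ[ℝ] 𝒱),
      Function.Injective V ∧ ∃ g : EuclideanSpace ℝ (Fin m),
        (LinearMap.adjoint V) (A (V g)) = (LinearMap.adjoint V) (b - A (v μ)) ∧
        v (μ + 1) = v μ + V g) :
    ⟪A (v L - v 0), v L - v 0⟫ ≤
      2 * L * ‖b‖ ^ 2 *
        ((1 / ‖b‖ ^ 2) * ((1 / 2) * ⟪A (v 0), v 0⟫ - ⟪b, v 0⟫) -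
          (1 / ‖b‖ ^ 2) * ((1 / 2) * ⟪A (v L), v L⟫ - ⟪b, v L⟫)) := by
  have hA : A.IsPositive := (A.isPositive_iff).2 ⟨hA_sym, fun u => by
    rcases eq_or_ne u 0 with rfl | hu
    · simp
    · exact (hA_pos u hu).le⟩
  have hdrop : ∀ μ ∈ range L, energy A b (v μ) - energy A b (v (μ + 1)) =
      ⟪A (v (μ + 1) - v μ), v (μ + 1) - v μ⟫ := by
    intro μ hμ
    obtain ⟨m, V, -, g, hg, hstep⟩ := hchain μ (mem_range.1 hμ)
    rw [hstep, energy_galerkin_step hA_sym hg, add_sub_cancel_left]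
    ring
  have htel : energy A b (v 0) - energy A b (v L) =
      ∑ μ ∈ range L, ⟪A (v (μ + 1) - v μ), v (μ + 1) - v μ⟫ := by
    rw [← sum_range_sub' (fun μ => energy A b (v μ)), sum_congr rfl hdrop]
  have hbound := hA.inner_sum_le_card_mul_sum (range L) (fun μ => v (μ + 1) - v μ)
  rw [sum_range_sub (fun μ => v μ), card_range, ← htel] at hbound
  have hb2 : ‖b‖ ^ 2 ≠ 0 := by positivity
  convert hbound using 1
  simp only [energy]
  field_simp
end

section
/- Let 𝒱 be a finite-dimensional real inner product space, A : 𝒱 → 𝒱 self-adjoint positive definite, b ∈ 𝒱 nonzero, and f(v) := (1/‖b‖²)·(½⟨Av, v⟩ − ⟨b, v⟩). Fix L ∈ ℕ and let (v_k)_{k∈ℕ} be a sequence in 𝒱 such that for every k there is a chain v_k = w_0, w_1, …, w_L = v_{k+1} in which each w_{μ+1} is obtained from w_μ by a Galerkin micro-step w_{μ+1} = w_μ + V_{k,μ} (V_{k,μ}† A V_{k,μ})⁻¹ V_{k,μ}† (b − A w_μ) for some injective linear map V_{k,μ} : ℝ^{m_{k,μ}} → 𝒱. Then ‖v_{k+1}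 − v_k‖_A → 0 as k → ∞, where ‖w‖_A := √⟨Aw, w⟩. -/
open Filter Topology
open scoped RealInnerProductSpace

section aux

variable {𝒱 : Type*} [NormedAddCommGroup 𝒱] [InnerProductSpace ℝ 𝒱]
variable {A : 𝒱 →ₗ[ℝ] 𝒱}

private lemma qnn (hA_pos : ∀ v, v ≠ 0 → 0 < ⟪A v, v⟫) (x : 𝒱) : 0 ≤ ⟪A x, x⟫ := by
  rcases eq_or_ne x 0 with h | h
  · simp [h]
  · exact (hA_pos x h).le

private lemma qcs (hA_sym : ∀ v w, ⟪A v, w⟫ = ⟪v, A w⟫)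
    (hA_pos : ∀ v, v ≠ 0 → 0 < ⟪A v, v⟫) (x y : 𝒱) :
    ⟪A x, y⟫ ≤ Real.sqrt ⟪A x, x⟫ * Real.sqrt ⟪A y, y⟫ := by
  have hsy : ⟪A y, x⟫ = ⟪A x, y⟫ := by rw [hA_sym, real_inner_comm]
  have key : ∀ t : ℝ, 0 ≤ ⟪A x, x⟫ * (t * t) + (2 * ⟪A x, y⟫) * t + ⟪A y, y⟫ := by
    intro t
    have h0 := qnn hA_pos (t • x + y)
    simp only [map_add, map_smul, inner_add_left, inner_add_right,
      inner_smul_left, inner_smul_right, starRingEnd_apply, star_trivial,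
      LinearMap.smul_apply, smul_eq_mul] at h0
    rw [hsy] at h0
    ring_nf at h0 ⊢
    linarith
  have hd := discrim_le_zero key
  rw [discrim] at hd
  have h2 : ⟪A x, y⟫ ^ 2 ≤ ⟪A x, x⟫ * ⟪A y, y⟫ := by nlinarith
  calc ⟪A x, y⟫ ≤ |⟪A x, y⟫| := le_abs_self _
    _ = Real.sqrt (⟪A x, y⟫ ^ 2) := (Real.sqrt_sq_eq_abs _).symm
    _ ≤ Real.sqrt (⟪A x, x⟫ * ⟪A y, y⟫) := Real.sqrt_le_sqrt h2
    _ = _ := Real.sqrt_mul (qnn hA_pos x) _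

private lemma qtri (hA_sym : ∀ v w, ⟪A v, w⟫ = ⟪v, A w⟫)
    (hA_pos : ∀ v, v ≠ 0 → 0 < ⟪A v, v⟫) (x y : 𝒱) :
    Real.sqrt ⟪A (x + y), x + y⟫ ≤ Real.sqrt ⟪A x, x⟫ + Real.sqrt ⟪A y, y⟫ := by
  have hsy : ⟪A y, x⟫ = ⟪A x, y⟫ := by rw [hA_sym, real_inner_comm]
  have hcs := qcs hA_sym hA_pos x y
  have hx := qnn hA_pos x
  have hy := qnn hA_pos y
  have hsx2 := Real.sq_sqrt hx
  have hsy2 := Real.sq_sqrt hy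
  have h1 : ⟪A (x + y), x + y⟫ ≤ (Real.sqrt ⟪A x, x⟫ + Real.sqrt ⟪A y, y⟫) ^ 2 := by
    simp only [map_add, inner_add_left, inner_add_right]
    nlinarith
  calc Real.sqrt ⟪A (x + y), x + y⟫
      ≤ Real.sqrt ((Real.sqrt ⟪A x, x⟫ + Real.sqrt ⟪A y, y⟫) ^ 2) := Real.sqrt_le_sqrt h1
    _ = _ := Real.sqrt_sq (by positivity)

private lemma qtri_sum (hA_sym : ∀ v w, ⟪A v, w⟫ = ⟪v, A w⟫)
    (hA_pos : ∀ v, v ≠ 0 → 0 < ⟪A v, v⟫) (x : ℕ → 𝒱) (n : ℕ) :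
    Real.sqrt ⟪A (∑ i ∈ Finset.range n, x i), ∑ i ∈ Finset.range n, x i⟫ ≤
      ∑ i ∈ Finset.range n, Real.sqrt ⟪A (x i), x i⟫ := by
  induction n with
  | zero => simp
  | succ n ih =>
      rw [Finset.sum_range_succ, Finset.sum_range_succ]
      calc Real.sqrt ⟪A ((∑ i ∈ Finset.range n, x i) + x n),
              (∑ i ∈ Finset.range n, x i) + x n⟫
          ≤ Real.sqrt ⟪A (∑ i ∈ Finset.range n, x i), ∑ i ∈ Finset.range n, x i⟫ +
              Real.sqrt ⟪A (x n), x n⟫ := qtri hA_sym hA_pos _ _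
        _ ≤ _ := by linarith

end aux

/-- Lemma 4.14: if each ALS iterate `v (k+1)` arises from `v k` by `L` Galerkin micro-steps
`w (μ+1) = w μ + V (V† A V)⁻¹ V† (b − A (w μ))` (the element `(V† A V)⁻¹ V† (b − A (w μ))`
being encoded as the solution `g` of the corresponding normal equation), then
`‖v (k+1) − v k‖_A → 0` as `k → ∞`, where `‖w‖_A = √⟨Aw, w⟩`. -/
theorem stmt_10 {𝒱 : Type*} [NormedAddCommGroup 𝒱] [InnerProductSpace ℝ 𝒱]
    [FiniteDimensional ℝ 𝒱]
    (A : 𝒱 →ₗ[ℝ] 𝒱) (hA_sym : ∀ v w, ⟪A v, w⟫ = ⟪v, A w⟫)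
    (hA_pos : ∀ v, v ≠ 0 → 0 < ⟪A v, v⟫)
    (b : 𝒱) (hb : b ≠ 0)
    (L : ℕ) (v : ℕ → 𝒱)
    (hchain : ∀ k : ℕ, ∃ w : ℕ → 𝒱, w 0 = v k ∧ w L = v (k + 1) ∧
      ∀ μ < L, ∃ (m : ℕ) (V : EuclideanSpace ℝ (Fin m) →ₗ[ℝ] 𝒱),
        Function.Injective V ∧ ∃ g : EuclideanSpace ℝ (Fin m),
          (LinearMap.adjoint V) (A (V g)) = (LinearMap.adjoint V) (b - A (w μ)) ∧
          w (μ + 1) = w μ + V g) :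
    Tendsto (fun k => Real.sqrt ⟪A (v (k + 1) - v k), v (k + 1) - v k⟫) atTop (𝓝 0) := by
  classical
  set F : 𝒱 → ℝ := fun x => 1 / 2 * ⟪A x, x⟫ - ⟪b, x⟫ with hFdef
  -- identity for a micro-step
  have hstep : ∀ w u : 𝒱, ⟪b - A w, u⟫ = ⟪A u, u⟫ →
      F (w + u) = F w - 1 / 2 * ⟪A u, u⟫ := by
    intro w u h
    have hsy : ⟪A u, w⟫ = ⟪A w, u⟫ := by rw [hA_sym, real_inner_comm]
    simp only [hFdef, map_add, inner_add_left, inner_add_right, inner_sub_left] at *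
    linarith
  -- per-k estimates
  have hk : ∀ k : ℕ, F (v (k + 1)) ≤ F (v k) ∧
      Real.sqrt ⟪A (v (k + 1) - v k), v (k + 1) - v k⟫ ≤
        (L : ℝ) * Real.sqrt (2 * (F (v k) - F (v (k + 1)))) := by
    intro k
    obtain ⟨w, hw0, hwL, hmicro⟩ := hchain k
    have hFstep : ∀ μ < L, F (w (μ + 1)) =
        F (w μ) - 1 / 2 * ⟪A (w (μ + 1) - w μ), w (μ + 1) - w μ⟫ := by
      intro μ hμ
      obtain ⟨m, V, -, g, heq, hw⟩ := hmicro μ hμ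
      have h1 : ⟪b - A (w μ), V g⟫ = ⟪A (V g), V g⟫ := by
        have h2 := congrArg (fun z => ⟪z, g⟫) heq
        simpa only [LinearMap.adjoint_inner_left] using h2.symm
      have := hstep (w μ) (V g) h1
      rw [hw]
      simpa using this
    have htel : ∀ n, n ≤ L → F (w 0) - F (w n) =
        1 / 2 * ∑ μ ∈ Finset.range n, ⟪A (w (μ + 1) - w μ), w (μ + 1) - w μ⟫ := by
      intro n
      induction n with
      | zero => simp
      | succ n ih =>
          intro hn
          have hn' : n ≤ L := Nat.le_of_succ_le hn
          rw [Finset.sum_range_succ, hFstep n (Nat.lt_of_succ_le hn)]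
          have := ih hn'
          ring_nf
          ring_nf at this
          linarith
    have hδ : F (v k) - F (v (k + 1)) =
        1 / 2 * ∑ μ ∈ Finset.range L, ⟪A (w (μ + 1) - w μ), w (μ + 1) - w μ⟫ := by
      rw [← hw0, ← hwL]; exact htel L le_rfl
    have hnn : ∀ μ ∈ Finset.range L, (0 : ℝ) ≤ ⟪A (w (μ + 1) - w μ), w (μ + 1) - w μ⟫ :=
      fun μ _ => qnn hA_pos _
    have hδnn : 0 ≤ F (v k) - F (v (k + 1)) := by
      rw [hδ]
      have := Finset.sum_nonneg hnn
      linarith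
    refine ⟨by linarith, ?_⟩
    have hd : v (k + 1) - v k = ∑ μ ∈ Finset.range L, (w (μ + 1) - w μ) := by
      rw [Finset.sum_range_sub, hw0, hwL]
    have hbound : ∀ μ ∈ Finset.range L,
        Real.sqrt ⟪A (w (μ + 1) - w μ), w (μ + 1) - w μ⟫ ≤
          Real.sqrt (2 * (F (v k) - F (v (k + 1)))) := by
      intro μ hμ
      apply Real.sqrt_le_sqrt
      have hsingle := Finset.single_le_sum hnn hμ
      rw [hδ]; linarith
    calc Real.sqrt ⟪A (v (k + 1) - v k), v (k + 1) - v k⟫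
        = Real.sqrt ⟪A (∑ μ ∈ Finset.range L, (w (μ + 1) - w μ)),
            ∑ μ ∈ Finset.range L, (w (μ + 1) - w μ)⟫ := by rw [hd]
      _ ≤ ∑ μ ∈ Finset.range L, Real.sqrt ⟪A (w (μ + 1) - w μ), w (μ + 1) - w μ⟫ :=
          qtri_sum hA_sym hA_pos _ _
      _ ≤ ∑ μ ∈ Finset.range L, Real.sqrt (2 * (F (v k) - F (v (k + 1)))) :=
          Finset.sum_le_sum hbound
      _ = (L : ℝ) * Real.sqrt (2 * (F (v k) - F (v (k + 1)))) := by
          rw [Finset.sum_const, Finset.card_range]; simp [mul_comm]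
  -- F ∘ v is antitone and bounded below
  have hanti : Antitone (fun k => F (v k)) :=
    antitone_nat_of_succ_le fun k => (hk k).1
  obtain ⟨x, hx⟩ : ∃ x, A x = b := by
    have hinj : Function.Injective A := by
      rw [← LinearMap.ker_eq_bot, LinearMap.ker_eq_bot']
      intro z hz
      by_contra hz0
      have := hA_pos z hz0
      rw [hz] at this
      simp at this
    exact (LinearMap.injective_iff_surjective.mp hinj) b
  have hbdd : ∀ k, -(1 / 2 * ⟪A x, x⟫) ≤ F (v k) := by
    intro k
    have h0 := qnn hA_pos (v k - x)
    have h1 : ⟪A (v k), x⟫ = ⟪b, v k⟫ := by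
      rw [hA_sym, hx, real_inner_comm]
    have h2 : ⟪A x, v k⟫ = ⟪b, v k⟫ := by rw [hx]
    simp only [map_sub, inner_sub_left, inner_sub_right] at h0
    simp only [hFdef]
    linarith
  have hconv : Tendsto (fun k => F (v k)) atTop (𝓝 (⨅ k, F (v k))) :=
    tendsto_atTop_ciInf hanti ⟨-(1 / 2 * ⟪A x, x⟫), by
      rintro y ⟨k, rfl⟩; exact hbdd k⟩
  have hδ0 : Tendsto (fun k => F (v k) - F (v (k + 1))) atTop (𝓝 0) := by
    have h2 : Tendsto (fun k => F (v (k + 1))) atTop (𝓝 (⨅ k, F (v k))) :=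
      hconv.comp (tendsto_add_atTop_nat 1)
    simpa using hconv.sub h2
  have hg : Tendsto (fun k => (L : ℝ) * Real.sqrt (2 * (F (v k) - F (v (k + 1)))))
      atTop (𝓝 0) := by
    have h1 : Tendsto (fun k => 2 * (F (v k) - F (v (k + 1)))) atTop (𝓝 0) := by
      simpa using hδ0.const_mul 2
    have h2 : Tendsto (fun k => Real.sqrt (2 * (F (v k) - F (v (k + 1))))) atTop (𝓝 0) := by
      have := (Real.continuous_sqrt.tendsto 0).comp h1
      simp only [Function.comp_def, Real.sqrt_zero] at this
      exact this
    simpa using h2.const_mul (L : ℝ)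
  exact squeeze_zero (fun k => Real.sqrt_nonneg _) (fun k => (hk k).2) hg
end

section
/- Let (v_k)_{k∈ℕ} be a sequence in a finite-dimensional real normed vector space with ‖v_{k+1} − v_k‖ → 0. Suppose v̄ is an accumulation point of (v_k) and there exists ε > 0 such that v̄ is the only accumulation point of (v_k) in the closed ball { v : ‖v − v̄‖ ≤ ε }. Then v_k → v̄. -/
open Filter Topology

/-- The set of accumulation points of a sequence: limits of convergent subsequences. -/
def accPts {E : Type*} [TopologicalSpace E] (v : ℕ → E) : Set E :=
  {p | ∃ φ : ℕ → ℕ, StrictMono φ ∧ Tendsto (v ∘ φ) atTop (𝓝 p)}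

/-- Convergence part of Theorem 4.20: a sequence in a finite-dimensional real normed vector
space with `‖v (k+1) − v k‖ → 0` converges to any of its accumulation points `v̄` that is
isolated, i.e. the only accumulation point in some closed ball `{v : ‖v − v̄‖ ≤ ε}`, `ε > 0`. -/
theorem stmt_13 {E : Type*} [NormedAddCommGroup E] [NormedSpace ℝ E]
    [FiniteDimensional ℝ E]
    (v : ℕ → E)
    (hstep : Tendsto (fun k => ‖v (k + 1) - v k‖) atTop (𝓝 0))
    (vbar : E) (hacc : vbar ∈ accPts v)
    (ε : ℝ) (hε : 0 < ε)
    (hiso : ∀ p ∈ accPts v, ‖p - vbar‖ ≤ ε → p = vbar) :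
    Tendsto v atTop (𝓝 vbar) := by
  classical
  by_contra h
  rw [Metric.tendsto_atTop] at h
  push_neg at h
  obtain ⟨r, hr, hfar⟩ := h
  set δ := min r ε with hδdef
  have hδ : 0 < δ := lt_min hr hε
  have hδε : δ ≤ ε := min_le_right r ε
  obtain ⟨φ, hφ, hφt⟩ := hacc
  obtain ⟨N0, hN0⟩ := Metric.tendsto_atTop.mp hstep (δ / 2) (by positivity)
  have hstep' : ∀ n ≥ N0, ‖v (n + 1) - v n‖ < δ / 2 := by
    intro n hn
    have := hN0 n hn
    rwa [Real.dist_eq, sub_zero, abs_of_nonneg (norm_nonneg _)] at this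
  obtain ⟨N1, hN1⟩ := Metric.tendsto_atTop.mp hφt (δ / 2) (by positivity)
  have hnear : ∀ N, ∃ k ≥ N, ‖v k - vbar‖ < δ / 2 := by
    intro N
    refine ⟨φ (max N N1), le_trans (le_max_left _ _) hφ.le_apply, ?_⟩
    have := hN1 (max N N1) (le_max_right _ _)
    rwa [Function.comp_apply, dist_eq_norm] at this
  have hann : ∃ᶠ k in atTop, δ / 2 ≤ ‖v k - vbar‖ ∧ ‖v k - vbar‖ ≤ δ := by
    rw [Filter.frequently_atTop]
    intro N
    obtain ⟨k, hk, hknear⟩ := hnear (max N N0)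
    obtain ⟨m, hm, hmfar⟩ := hfar (k + 1)
    have hmfar' : δ ≤ ‖v m - vbar‖ := by
      rw [dist_eq_norm] at hmfar
      exact le_trans (min_le_left r ε) hmfar
    have hex : ∃ j, k < j ∧ δ / 2 ≤ ‖v j - vbar‖ :=
      ⟨m, hm, le_trans (by linarith) hmfar'⟩
    set j := Nat.find hex with hjdef
    obtain ⟨hjk, hjnorm⟩ := Nat.find_spec hex
    have hjprev : ‖v (j - 1) - vbar‖ < δ / 2 := by
      rcases eq_or_lt_of_le (Nat.succ_le_of_lt hjk) with heq | hlt
      · have hkj : j - 1 = k := by omega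
        rw [hkj]; exact hknear
      · have hk1 : k < j - 1 := by omega
        have hmin := Nat.find_min hex (m := j - 1) (by omega)
        push_neg at hmin
        exact hmin hk1
    have hj1 : j - 1 + 1 = j := by omega
    have hstepj : ‖v j - v (j - 1)‖ < δ / 2 := by
      have := hstep' (j - 1) (by omega)
      rwa [hj1] at this
    have hjhigh : ‖v j - vbar‖ ≤ δ := by
      calc ‖v j - vbar‖ ≤ ‖v j - v (j - 1)‖ + ‖v (j - 1) - vbar‖ :=
            norm_sub_le_norm_sub_add_norm_sub _ _ _
        _ ≤ δ := by linarith
    exact ⟨j, by omega, hjnorm, hjhigh⟩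
  obtain ⟨ψ, hψ, hψspec⟩ := Filter.extraction_of_frequently_atTop hann
  have hmem : ∀ n, v (ψ n) ∈ Metric.closedBall vbar δ := fun n => by
    rw [Metric.mem_closedBall, dist_eq_norm]; exact (hψspec n).2
  obtain ⟨p, hpmem, χ, hχ, hχt⟩ :=
    (isCompact_closedBall vbar δ).tendsto_subseq hmem
  have hχt' : Tendsto (v ∘ (ψ ∘ χ)) atTop (𝓝 p) := hχt
  have hpacc : p ∈ accPts v := ⟨ψ ∘ χ, hψ.comp hχ, hχt'⟩
  have hlow : δ / 2 ≤ ‖p - vbar‖ := by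
    have ht : Tendsto (fun n => ‖v (ψ (χ n)) - vbar‖) atTop (𝓝 ‖p - vbar‖) :=
      ((hχt'.sub_const vbar).norm)
    exact ge_of_tendsto ht (Eventually.of_forall fun n => (hψspec (χ n)).1)
  have hhigh : ‖p - vbar‖ ≤ ε := by
    rw [← dist_eq_norm]
    exact le_trans (Metric.mem_closedBall.mp hpmem) hδε
  have hp := hiso p hpacc hhigh
  rw [hp, sub_self, norm_zero] at hlow
  linarith
end

section
/- Let N ≥ 2 and work in ℝ^N with the Euclidean inner product. Let v̄ ∈ ℝ^N be nonzero, set 𝐯 := v̄/‖v̄‖, and let R : ℝ^{N−1} → ℝ^N be a linear isometry whose range is the orthogonal complement of span(v̄). Let N₀ : ℝ^N → ℝ^N be a linear map, w ∈ ℝ^N, and w' := N₀ w. Write c := ⟨𝐯, w⟩, s := R† w, c' := ⟨𝐯, w'⟩, s' := R† w', and assume c ≠ 0, s ≠ 0, and c' ≠ 0. Define q_s := ‖R† N₀ 𝐯 · c + R† N₀ R s‖ / ‖s‖ and q_c := |⟨𝐯, N₀ 𝐯⟩ · c + ⟨𝐯, N₀ R s⟩| / |c|. Then q_c ≠ 0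 and ‖s'‖/|c'| = (q_s/q_c) · (‖s‖/|c|); i.e. |tan∠(v̄, w')| = (q_s/q_c) · |tan∠(v̄, w)|, where |tan∠(v̄, u)| := ‖R† u‖ / |⟨𝐯, u⟩|. -/
open scoped RealInnerProductSpace

/-- Lemma 4.19 (recursion formula for the tangent of the angle): with `𝐯 = v̄/‖v̄‖`, a linear
isometry `R : ℝ^{N−1} → ℝ^N` onto the orthogonal complement of `span v̄`, a linear map `N₀`,
`w' = N₀ w`, `c = ⟨𝐯, w⟩`, `s = R† w`, `c' = ⟨𝐯, w'⟩`, `s' = R† w'`, and assuming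
`c ≠ 0`, `s ≠ 0`, `c' ≠ 0`, the quantities
`q_s = ‖c • R†(N₀ 𝐯) + R†(N₀ (R s))‖ / ‖s‖` and `q_c = |⟨𝐯, N₀ 𝐯⟩ c + ⟨𝐯, N₀ (R s)⟩| / |c|`
satisfy `q_c ≠ 0` and `‖s'‖/|c'| = (q_s/q_c) · (‖s‖/|c|)`, i.e.
`|tan∠(v̄, w')| = (q_s/q_c) |tan∠(v̄, w)|`. -/
theorem stmt_15 (N : ℕ) (hN : 2 ≤ N)
    (vbar : EuclideanSpace ℝ (Fin N)) (hvbar : vbar ≠ 0)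
    (R : EuclideanSpace ℝ (Fin (N - 1)) →ₗᵢ[ℝ] EuclideanSpace ℝ (Fin N))
    (hR : LinearMap.range R.toLinearMap = (Submodule.span ℝ {vbar})ᗮ)
    (N₀ : EuclideanSpace ℝ (Fin N) →ₗ[ℝ] EuclideanSpace ℝ (Fin N))
    (w : EuclideanSpace ℝ (Fin N)) :
    let vhat := ‖vbar‖⁻¹ • vbar
    let w' := N₀ w
    let c := ⟪vhat, w⟫
    let s := (LinearMap.adjoint R.toLinearMap) w
    let c' := ⟪vhat, w'⟫
    let s' := (LinearMap.adjoint R.toLinearMap) w'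
    c ≠ 0 → s ≠ 0 → c' ≠ 0 →
      let qs := ‖c • (LinearMap.adjoint R.toLinearMap) (N₀ vhat) +
          (LinearMap.adjoint R.toLinearMap) (N₀ (R s))‖ / ‖s‖
      let qc := |⟪vhat, N₀ vhat⟫ * c + ⟪vhat, N₀ (R s)⟫| / |c|
      qc ≠ 0 ∧ ‖s'‖ / |c'| = (qs / qc) * (‖s‖ / |c|) := by
  intro vhat w' c s c' s' hc hs hc' qs qc
  set Rd := LinearMap.adjoint R.toLinearMap with hRdDef
  have hnv : ‖vbar‖ ≠ 0 := norm_ne_zero_iff.mpr hvbar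
  -- adjoint is a left inverse of R
  have hRR : ∀ u, Rd (R u) = u := by
    intro u
    apply ext_inner_right ℝ
    intro x
    rw [hRdDef, LinearMap.adjoint_inner_left]
    exact R.inner_map_map u x
  -- Rd vhat = 0
  have hvmem : vhat ∈ Submodule.span ℝ {vbar} :=
    Submodule.smul_mem _ _ (Submodule.mem_span_singleton_self vbar)
  have hRdv : Rd vhat = 0 := by
    apply ext_inner_right ℝ
    intro x
    rw [hRdDef, LinearMap.adjoint_inner_left]
    have hx : R.toLinearMap x ∈ (Submodule.span ℝ {vbar})ᗮ := by
      rw [← hR]; exact LinearMap.mem_range_self _ x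
    simpa using (Submodule.mem_orthogonal _ _).mp hx vhat hvmem
  -- decomposition w = c • vhat + R s
  have hmem : w - c • vhat ∈ LinearMap.range R.toLinearMap := by
    rw [hR, Submodule.mem_orthogonal']
    intro u hu
    obtain ⟨a, rfl⟩ := Submodule.mem_span_singleton.mp hu
    have : ⟪vbar, w - c • vhat⟫ = 0 := by
      simp only [inner_sub_right, real_inner_smul_right]
      show ⟪vbar, w⟫ - ⟪(‖vbar‖:ℝ)⁻¹ • vbar, w⟫ * ⟪vbar, (‖vbar‖:ℝ)⁻¹ • vbar⟫ = 0
      rw [real_inner_smul_left, real_inner_smul_right, real_inner_self_eq_norm_sq]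
      field_simp
      ring
    rw [real_inner_smul_right, real_inner_comm, this, mul_zero]
  obtain ⟨u, hu⟩ := hmem
  have hsu : s = u := by
    have : Rd w = Rd (w - c • vhat) + c • Rd vhat := by
      rw [← map_smul, ← map_add]; congr 1; abel
    rw [show s = Rd w from rfl, this, hRdv, ← hu,
      show Rd (R.toLinearMap u) = u from hRR u]
    simp
  have hw : w = c • vhat + R s := by
    rw [hsu, show (R u : EuclideanSpace ℝ (Fin N)) = R.toLinearMap u from rfl, hu]; abel
  -- compute s' and c'
  have hs' : s' = c • Rd (N₀ vhat) + Rd (N₀ (R s)) := by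
    show Rd (N₀ w) = _
    rw [hw]
    simp [map_add, map_smul]
  have hc'eq : c' = ⟪vhat, N₀ vhat⟫ * c + ⟪vhat, N₀ (R s)⟫ := by
    show ⟪vhat, N₀ w⟫ = _
    rw [hw, map_add, map_smul, inner_add_right, real_inner_smul_right]
    ring
  have hqs : qs = ‖s'‖ / ‖s‖ := by rw [hs']
  have hqc : qc = |c'| / |c| := by rw [hc'eq]
  have hns : ‖s‖ ≠ 0 := norm_ne_zero_iff.mpr hs
  have hqcne : qc ≠ 0 := by
    rw [hqc]
    exact div_ne_zero (abs_ne_zero.mpr hc') (abs_ne_zero.mpr hc)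
  refine ⟨hqcne, ?_⟩
  rw [hqs, hqc]
  have hac : |c| ≠ 0 := abs_ne_zero.mpr hc
  have hac' : |c'| ≠ 0 := abs_ne_zero.mpr hc'
  field_simp
end
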